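/- arXiv:1810.13300 — 3 statements merged into one kernel-verified Lean document; each statement's English description precedes it below -/
import Mathlib

section
/- If G is a finite graph such that every two distinct vertices of G have a common neighbour, then every harmonious colouring of G is injective; consequently the number of harmonious colourings of G with λ colours equals λ(λ−1)(λ−2)···(λ−n+1), where n = |V(G)|. -/
/-- `f` is a harmonious colouring of `G` with colours in `Fin L`: a proper colouring
in which every unordered pair of colours appears on at most one edge. -/
def IsHarmonious {V : Type} [DecidableEq V] (G : SimpleGraph V) {L : ℕ}
    (f : V → Fin L) : Prop :=
  (∀ u v : V, G.Adj u v → f u ≠ f v) ∧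
  ∀ u v u' v' : V, G.Adj u v → G.Adj u' v' →
    ({f u, f v} : Finset (Fin L)) = {f u', f v'} →
    ({u, v} : Finset V) = {u', v'}

/-- If every two distinct vertices of a finite graph `G` have a common neighbour,
then every harmonious colouring of `G` is injective, and the number of harmonious
colourings of `G` with `λ` colours is `λ(λ-1)⋯(λ-n+1)` where `n = |V(G)|`. -/
theorem harmonious_of_common_neighbour {V : Type} [Fintype V] [DecidableEq V]
    (G : SimpleGraph V)
    (h : ∀ u v : V, u ≠ v → ∃ w : V, G.Adj u w ∧ G.Adj v w) :
    (∀ (L : ℕ) (f : V → Fin L), IsHarmonious G f → Function.Injective f) ∧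
    (∀ L : ℕ, Nat.card {f : V → Fin L // IsHarmonious G f} =
      L.descFactorial (Fintype.card V)) := by
  have key : ∀ (L : ℕ) (f : V → Fin L), IsHarmonious G f ↔ Function.Injective f := by
    intro L f
    constructor
    · rintro ⟨hprop, hpair⟩ u v hfuv
      by_contra hne
      obtain ⟨w, hu, hv⟩ := h u v hne
      have h1 : ({f u, f w} : Finset (Fin L)) = {f v, f w} := by rw [hfuv]
      have h2 := hpair u w v w hu hv h1
      have hu_mem : u ∈ ({v, w} : Finset V) := by
        rw [← h2]; exact Finset.mem_insert_self u {w}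
      rcases Finset.mem_insert.1 hu_mem with h3 | h3
      · exact hne h3
      · exact hu.ne (Finset.mem_singleton.1 h3)
    · intro hinj
      refine ⟨fun u v hadj hfe => hadj.ne (hinj hfe), fun u v u' v' _ _ heq => ?_⟩
      apply Finset.image_injective hinj
      simpa [Finset.image_insert, Finset.image_singleton] using heq
  refine ⟨fun L f hf => (key L f).1 hf, fun L => ?_⟩
  have e : {f : V → Fin L // IsHarmonious G f} ≃ (V ↪ Fin L) :=
    (Equiv.subtypeEquivRight (key L)).trans (Equiv.subtypeInjectiveEquivEmbedding _ _)
  rw [Nat.card_congr e, Nat.card_eq_fintype_card, Fintype.card_embedding_eq,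
    Fintype.card_fin]
end

section
/- Fix k ≥ 1. If G is a finite graph such that for every two distinct vertices u, v there exist vertices w_1, ..., w_k with both {u, w_1, ..., w_k} and {v, w_1, ..., w_k} inducing complete subgraphs of G, then every k-harmonious colouring of G is injective, and hence the number of k-harmonious colourings of G with λ colours is λ(λ−1)···(λ−n+1) where n = |V(G)|. -/
/-- `f` is a `k`-harmonious colouring of `G` with colours in `Fin L`: a proper
colouring such that every `k`-element set of colours appears as the colour set of at
most one `k`-clique of `G`. -/
def IsKHarmonious {V : Type} [DecidableEq V] (G : SimpleGraph V) (k : ℕ) {L : ℕ}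
    (f : V → Fin L) : Prop :=
  (∀ u v : V, G.Adj u v → f u ≠ f v) ∧
  ∀ A B : Finset V, A.card = k → B.card = k → G.IsClique ↑A → G.IsClique ↑B →
    A.image f = B.image f → A = B

/-- Fix `k ≥ 1`. If for every two distinct vertices `u, v` of a finite graph `G`
there are `k` vertices `w_1, ..., w_k` such that `{u, w_1, ..., w_k}` and
`{v, w_1, ..., w_k}` both induce complete subgraphs, then every `k`-harmonious
colouring of `G` is injective, and the number of `k`-harmonious colourings with `λ`
colours is `λ(λ-1)⋯(λ-n+1)` where `n = |V(G)|`. -/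
theorem kHarmonious_of_common_cliques {V : Type} [Fintype V] [DecidableEq V]
    (G : SimpleGraph V) (k : ℕ) (hk : 1 ≤ k)
    (h : ∀ u v : V, u ≠ v → ∃ s : Finset V, s.card = k ∧ u ∉ s ∧ v ∉ s ∧
      G.IsClique ↑(insert u s) ∧ G.IsClique ↑(insert v s)) :
    (∀ (L : ℕ) (f : V → Fin L), IsKHarmonious G k f → Function.Injective f) ∧
    (∀ L : ℕ, Nat.card {f : V → Fin L // IsKHarmonious G k f} =
      L.descFactorial (Fintype.card V)) := by
  have inj : ∀ (L : ℕ) (f : V → Fin L), IsKHarmonious G k f → Function.Injective f := by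
    intro L f hf u v hfe
    by_contra huv
    obtain ⟨s, hcard, hus, hvs, hcu, hcv⟩ := h u v huv
    obtain ⟨w, hw⟩ := Finset.card_pos.mp (by omega : 0 < s.card)
    set A := insert u (s.erase w) with hA
    set B := insert v (s.erase w) with hB
    have huA : u ∉ s.erase w := fun hh => hus (Finset.mem_of_mem_erase hh)
    have hvB : v ∉ s.erase w := fun hh => hvs (Finset.mem_of_mem_erase hh)
    have hAcard : A.card = k := by
      rw [hA, Finset.card_insert_of_notMem huA, Finset.card_erase_of_mem hw, hcard]
      omega
    have hBcard : B.card = k := by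
      rw [hB, Finset.card_insert_of_notMem hvB, Finset.card_erase_of_mem hw, hcard]
      omega
    have hAclique : G.IsClique ↑A := hcu.subset
      (Finset.coe_subset.mpr (Finset.insert_subset_insert _ (Finset.erase_subset _ _)))
    have hBclique : G.IsClique ↑B := hcv.subset
      (Finset.coe_subset.mpr (Finset.insert_subset_insert _ (Finset.erase_subset _ _)))
    have himg : A.image f = B.image f := by
      rw [hA, hB, Finset.image_insert, Finset.image_insert, hfe]
    have hAB := hf.2 A B hAcard hBcard hAclique hBclique himg
    have : u ∈ B := hAB ▸ Finset.mem_insert_self u _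
    rcases Finset.mem_insert.mp this with h1 | h2
    · exact huv h1
    · exact hus (Finset.mem_of_mem_erase h2)
  refine ⟨inj, fun L => ?_⟩
  have hiff : ∀ f : V → Fin L, IsKHarmonious G k f ↔ Function.Injective f := by
    intro f
    constructor
    · exact inj L f
    · intro hi
      refine ⟨fun u v hadj he => G.ne_of_adj hadj (hi he),
        fun A B _ _ _ _ hAB => Finset.image_injective hi hAB⟩
  have e1 : {f : V → Fin L // IsKHarmonious G k f} ≃ {f : V → Fin L // Function.Injective f} :=
    Equiv.subtypeEquivRight hiff
  have e2 : {f : V → Fin L // Function.Injective f} ≃ (V ↪ Fin L) :=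
    Equiv.subtypeInjectiveEquivEmbedding V (Fin L)
  rw [Nat.card_congr (e1.trans e2), Nat.card_eq_fintype_card, Fintype.card_embedding_eq,
    Fintype.card_fin]
end

section
/- For a fixed positive integer a and s(n) = ⌈4·log(n/2)⌉ + 1, the quantity (C(n, a·s(n))+1)^{a·s(n)+1} · n! / 2^{n(n−1)/2} tends to 0 as n → ∞. -/
/-!
Everything is bounded by a power of two. With `L = log₂ n` we have `s(n) ≤ 4L + 1`,
`C(n, k) + 1 ≤ 2^(n+1)` and `n! ≤ n^n ≤ 2^(n(L+1))`, so the numerator is at most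
`2^(O(a · n log n))`. Since `(log₂ n)² ≤ n` eventually, `n log n` is eventually swamped by
`n(n-1)/2`, leaving room for an extra factor `2^(-n)`.
-/

open Filter

lemma Nat.sq_le_two_pow_of_four_le {k : ℕ} (hk : 4 ≤ k) : k ^ 2 ≤ 2 ^ k := by
  induction k, hk using Nat.le_induction with
  | base => norm_num
  | succ k hk ih => rw [pow_succ 2 k]; nlinarith

lemma Nat.log_two_sq_le {n : ℕ} (h : 4 ≤ Nat.log 2 n) : Nat.log 2 n ^ 2 ≤ n := by
  have hn : n ≠ 0 := by rintro rfl; simp at h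
  exact (Nat.sq_le_two_pow_of_four_le h).trans (Nat.pow_log_le_self 2 hn)

lemma Nat.factorial_le_two_pow_mul_log (n : ℕ) : n.factorial ≤ 2 ^ (n * (Nat.log 2 n + 1)) :=
  calc n.factorial ≤ n ^ n := Nat.factorial_le_pow n
    _ ≤ (2 ^ (Nat.log 2 n + 1)) ^ n :=
      Nat.pow_le_pow_left (Nat.lt_pow_succ_log_self one_lt_two n).le n
    _ = 2 ^ (n * (Nat.log 2 n + 1)) := by rw [← pow_mul, mul_comm]

lemma Real.log_div_two_le_natLog (n : ℕ) : Real.log (n / 2) ≤ Nat.log 2 n := by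
  rcases Nat.eq_zero_or_pos n with rfl | hn
  · simp
  have hlt : (n / 2 : ℝ) < 2 ^ Nat.log 2 n := by
    have : (n : ℝ) < 2 ^ (Nat.log 2 n + 1) := by
      exact_mod_cast Nat.lt_pow_succ_log_self one_lt_two n
    rw [pow_succ] at this; linarith
  calc Real.log (n / 2) ≤ Real.log (2 ^ Nat.log 2 n) := Real.log_le_log (by positivity) hlt.le
    _ = Nat.log 2 n * Real.log 2 := by rw [Real.log_pow]
    _ ≤ Nat.log 2 n := mul_le_of_le_one_right (by positivity) (by linarith [Real.log_two_lt_d9])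

lemma Nat.ceil_four_mul_log_div_two_le (n : ℕ) : ⌈4 * Real.log (n / 2)⌉₊ ≤ 4 * Nat.log 2 n :=
  Nat.ceil_le.mpr (by push_cast; linarith [Real.log_div_two_le_natLog n])

lemma Nat.eventually_mul_succ_mul_log_le (C : ℕ) :
    ∀ᶠ n in atTop, C * (n + 1) * (Nat.log 2 n + 1) ≤ n * (n - 1) / 2 := by
  filter_upwards [eventually_ge_atTop (2 ^ (8 * C + 4))] with n hn
  set L := Nat.log 2 n
  have hL : 8 * C + 4 ≤ L := Nat.le_log_of_pow_le one_lt_two hn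
  have hL2 : L ^ 2 ≤ n := Nat.log_two_sq_le (by omega)
  have h8 : 8 * C * L + 1 ≤ n := by nlinarith
  rw [Nat.le_div_iff_mul_le two_pos]
  calc C * (n + 1) * (L + 1) * 2 ≤ C * (2 * n) * (2 * L) * 2 := by gcongr <;> omega
    _ = (8 * C * L) * n := by ring
    _ ≤ (n - 1) * n := Nat.mul_le_mul_right n (by omega)
    _ = n * (n - 1) := mul_comm _ _

lemma Nat.choose_add_one_pow_mul_factorial_le (n k : ℕ) :
    (n.choose k + 1) ^ (k + 1) * n.factorial ≤
      2 ^ ((n + 1) * (k + 1) + n * (Nat.log 2 n + 1)) := by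
  have hchoose : n.choose k + 1 ≤ 2 ^ (n + 1) := by
    have := Nat.choose_le_two_pow n k
    have := Nat.one_le_two_pow (n := n)
    rw [pow_succ]; omega
  rw [pow_add 2, pow_mul 2]
  exact Nat.mul_le_mul (Nat.pow_le_pow_left hchoose _) (Nat.factorial_le_two_pow_mul_log n)

lemma div_two_pow_le_inv_two_pow {x : ℝ} {e m n : ℕ} (hx : x ≤ 2 ^ e) (h : e + n ≤ m) :
    x / 2 ^ m ≤ 2⁻¹ ^ n := by
  have hm : (2 : ℝ) ^ e * 2 ^ n ≤ 2 ^ m := by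
    rw [← pow_add]; exact pow_le_pow_right₀ one_le_two h
  rw [div_le_iff₀ (by positivity), inv_pow, ← div_eq_inv_mul, le_div_iff₀ (by positivity)]
  nlinarith [pow_pos (two_pos : (0:ℝ) < 2) n]

theorem key_counting_estimate_general (a : ℕ) :
    Tendsto (fun n : ℕ =>
      let s : ℕ := ⌈4 * Real.log ((n : ℝ) / 2)⌉₊ + 1
      ((n.choose (a * s) : ℝ) + 1) ^ (a * s + 1) * (n.factorial : ℝ) /
        2 ^ (n * (n - 1) / 2))
      atTop (nhds 0) := by
  refine squeeze_zero' (Eventually.of_forall fun n => by dsimp only; positivity) ?_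
    (tendsto_pow_atTop_nhds_zero_of_lt_one (by norm_num : (0 : ℝ) ≤ 2⁻¹) (by norm_num))
  filter_upwards [Nat.eventually_mul_succ_mul_log_le (4 * a + 3)] with n hn
  set s := ⌈4 * Real.log ((n : ℝ) / 2)⌉₊ + 1
  set L := Nat.log 2 n
  have hs : s ≤ 4 * L + 1 := by have := Nat.ceil_four_mul_log_div_two_le n; omega
  have hexp : (n + 1) * (a * s + 1) + n * (L + 1) + n ≤ n * (n - 1) / 2 :=
    hn.trans' (by nlinarith [Nat.mul_le_mul_left (n + 1) (Nat.mul_le_mul_left a hs)])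
  refine div_two_pow_le_inv_two_pow ?_ hexp
  exact_mod_cast Nat.choose_add_one_pow_mul_factorial_le n (a * s)

/-- For fixed `a ≥ 1` and `s(n) = ⌈4·log(n/2)⌉ + 1`, the quantity
`(C(n, a·s(n)) + 1)^(a·s(n)+1) · n! / 2^(n(n-1)/2)` tends to `0` as `n → ∞`. -/
theorem key_counting_estimate (a : ℕ) (ha : 0 < a) :
    Tendsto (fun n : ℕ =>
      let s : ℕ := ⌈4 * Real.log ((n : ℝ) / 2)⌉₊ + 1
      ((n.choose (a * s) : ℝ) + 1) ^ (a * s + 1) * (n.factorial : ℝ) /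
        2 ^ (n * (n - 1) / 2))
      atTop (nhds 0) :=
  key_counting_estimate_general a
end
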